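/- For every integer m ≥ 1, the group P′_{8·3^m}, i.e. the presented group ⟨x, y, z ∣ x² = (xy)² = y², zxz⁻¹ = y, zyz⁻¹ = xy, z^{3^m} = 1⟩ (the quotient of the free group on three generators x, y, z by the normal closure of the relators x²((xy)²)⁻¹, (xy)²y⁻², zxz⁻¹y⁻¹, zyz⁻¹(xy)⁻¹, z^{3^m}), has Grossman's Property A. -/

import Mathlib

/-- A group `G` has Grossman's Property A if every class-preserving automorphism
(i.e. one sending each element to a conjugate of itself) is inner. -/
def HasPropertyA (G : Type*) [Group G] : Prop :=
  ∀ φ : G ≃* G, (∀ g : G, IsConj g (φ g)) → ∃ h : G, ∀ g : G, φ g = h * g * h⁻¹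

/-- The relators of the group
`P′_{8·3^m} = ⟨x, y, z ∣ x² = (xy)² = y², zxz⁻¹ = y, zyz⁻¹ = xy, z^{3^m} = 1⟩`,
where `x`, `y`, `z` are the generators `0`, `1`, `2`. -/
def PPrimeRels (m : ℕ) : Set (FreeGroup (Fin 3)) :=
  let x : FreeGroup (Fin 3) := FreeGroup.of 0
  let y : FreeGroup (Fin 3) := FreeGroup.of 1
  let z : FreeGroup (Fin 3) := FreeGroup.of 2
  {x ^ 2 * ((x * y) ^ 2)⁻¹, (x * y) ^ 2 * (y ^ 2)⁻¹,
    z * x * z⁻¹ * y⁻¹, z * y * z⁻¹ * (x * y)⁻¹, z ^ (3 ^ m)}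


/-!
The first two relations say `x y x = y` and `y x y = x`, so conjugation by `x` and by `y` sends
each of `x, y, xy` to itself or its inverse, while conjugation by `z` permutes them cyclically.
Hence every conjugate of `x` is `t x^{±1} t⁻¹` with `t ∈ {1, z, z²}` commuting with `z`.
Composing a class-preserving automorphism with inner ones, we may assume it fixes `z` and sends
`x` to `x^{±1}`. The sign `-1` forces `x` and `y` to commute, hence `x² = 1`; so the automorphism
fixes `x` and `z`, which generate the group since `y = z x z⁻¹`.
-/

open Pointwise

theorem smul_union_inv_subset_of_smul_subset {M G : Type*} [Monoid M] [Group G]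
    [MulDistribMulAction M G] (a : M) {S : Set G} (h : a • S ⊆ S ∪ S⁻¹) :
    a • (S ∪ S⁻¹) ⊆ S ∪ S⁻¹ := by
  rw [Set.smul_set_union, Set.union_subset_iff]
  refine ⟨h, ?_⟩
  rintro _ ⟨w, hw, rfl⟩
  have := h (Set.smul_mem_smul_set (a := a) (Set.mem_inv.mp hw))
  rwa [smul_inv', ← Set.mem_inv, Set.union_inv, inv_inv, Set.union_comm] at this

structure IsPPrimeTriple {G : Type*} [Group G] (x y z : G) : Prop where
  sq_eq_mul_sq : x ^ 2 = (x * y) ^ 2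
  mul_sq_eq_sq : (x * y) ^ 2 = y ^ 2
  conj_fst : z * x * z⁻¹ = y
  conj_snd : z * y * z⁻¹ = x * y

namespace IsPPrimeTriple

variable {G : Type*} [Group G] {x y z : G} (h : IsPPrimeTriple x y z)
include h

theorem fst_mul_snd_mul_fst : x * y * x = y :=
  mul_right_cancel (b := y) <| by
    calc x * y * x * y = (x * y) ^ 2 := by simp only [sq, mul_assoc]
      _ = y * y := by rw [h.mul_sq_eq_sq, sq]

theorem snd_mul_fst_mul_snd : y * x * y = x :=
  mul_left_cancel (a := x) <| by
    calc x * (y * x * y) = (x * y) ^ 2 := by simp only [sq, mul_assoc]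
      _ = x * x := by rw [← h.sq_eq_mul_sq, sq]

theorem fst_conj_snd : x * y * x⁻¹ = y⁻¹ := by
  rw [mul_inv_eq_iff_eq_mul, eq_inv_mul_iff_mul_eq, ← mul_assoc, h.snd_mul_fst_mul_snd]

theorem snd_conj_fst : y * x * y⁻¹ = x⁻¹ := by
  rw [mul_inv_eq_iff_eq_mul, eq_inv_mul_iff_mul_eq, ← mul_assoc, h.fst_mul_snd_mul_fst]

theorem fst_conj_mul : x * (x * y) * x⁻¹ = (x * y)⁻¹ :=
  calc x * (x * y) * x⁻¹ = x * (x * y * x⁻¹) := by group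
    _ = y⁻¹ * (y * x * y⁻¹) := by rw [h.fst_conj_snd]; group
    _ = (x * y)⁻¹ := by rw [h.snd_conj_fst]; group

theorem snd_conj_mul : y * (x * y) * y⁻¹ = (x * y)⁻¹ :=
  calc y * (x * y) * y⁻¹ = y * x * y * y⁻¹ := by group
    _ = y⁻¹ * (y * x * y⁻¹) := by rw [h.snd_mul_fst_mul_snd]; group
    _ = (x * y)⁻¹ := by rw [h.snd_conj_fst]; group

theorem conj_mul : z * (x * y) * z⁻¹ = x :=
  calc z * (x * y) * z⁻¹ = (z * x * z⁻¹) * (z * y * z⁻¹) := by group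
    _ = x := by rw [h.conj_fst, h.conj_snd, ← mul_assoc, h.snd_mul_fst_mul_snd]

theorem conj_mem_union_inv (hgen : Subgroup.closure {x, y, z} = ⊤) (g : G) :
    g * x * g⁻¹ ∈ ({x, y, x * y} ∪ {x, y, x * y}⁻¹ : Set G) := by
  set P : Set G := {x, y, x * y} ∪ {x, y, x * y}⁻¹
  have hfin : P.Finite := (Set.toFinite _).union (Set.toFinite _).inv
  have hstab : Subgroup.closure {x, y, z} ≤
      (MulAction.stabilizer (MulAut G) P).comap MulAut.conj := by
    -- `P` is finite, so mapping `P` into itself already puts a generator in its stabilizer.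
    rw [Subgroup.closure_le]
    rintro a (rfl | rfl | rfl) <;>
      rw [SetLike.mem_coe, Subgroup.mem_comap,
        MulAction.mem_stabilizer_set_iff_smul_set_subset hfin] <;>
      refine smul_union_inv_subset_of_smul_subset _ ?_ <;>
      rintro _ ⟨w, (rfl | rfl | rfl), rfl⟩ <;>
      simp only [MulAut.smul_def, MulAut.conj_apply, mul_inv_cancel_right, h.fst_conj_snd,
        h.snd_conj_fst, h.fst_conj_mul, h.snd_conj_mul, h.conj_fst, h.conj_snd, h.conj_mul] <;>
      simp
  have hg := hstab (hgen ▸ Subgroup.mem_top g)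
  rw [Subgroup.mem_comap, MulAction.mem_stabilizer_iff] at hg
  have hx : MulAut.conj g • x ∈ MulAut.conj g • P := Set.smul_mem_smul_set (by simp [P])
  rwa [hg, MulAut.smul_def, MulAut.conj_apply] at hx

theorem exists_commute_conj_eq {w : G} (hw : w ∈ ({x, y, x * y} ∪ {x, y, x * y}⁻¹ : Set G)) :
    ∃ t, Commute t z ∧ (t * x * t⁻¹ = w ∨ t * x⁻¹ * t⁻¹ = w) := by
  have hS : ∀ v ∈ ({x, y, x * y} : Set G), ∃ t, Commute t z ∧ t * x * t⁻¹ = v := by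
    rintro v (rfl | rfl | rfl)
    · exact ⟨1, Commute.one_left z, by group⟩
    · exact ⟨z, Commute.refl z, h.conj_fst⟩
    · refine ⟨z ^ 2, (Commute.refl z).pow_left 2, ?_⟩
      rw [← h.conj_snd, ← h.conj_fst, sq]
      group
  rcases hw with hw | hw
  · obtain ⟨t, htz, ht⟩ := hS w hw
    exact ⟨t, htz, Or.inl ht⟩
  · obtain ⟨t, htz, ht⟩ := hS w⁻¹ hw
    exact ⟨t, htz, Or.inr (by rw [← inv_inv w, ← ht]; group)⟩

theorem inv_fst_eq_fst_of_map {χ : G →* G} (hz : χ z = z) (hx : χ x = x⁻¹) :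
    x⁻¹ = x := by
  have hy : χ y = y⁻¹ := by
    rw [← h.conj_fst, map_mul, map_mul, map_inv, hz, hx]
    group
  have hxy : Commute x⁻¹ y⁻¹ :=
    calc x⁻¹ * y⁻¹ = χ (x * y) := by rw [map_mul, hx, hy]
      _ = χ (z * y * z⁻¹) := by rw [h.conj_snd]
      _ = (z * y * z⁻¹)⁻¹ := by rw [map_mul, map_mul, map_inv, hz, hy]; group
      _ = y⁻¹ * x⁻¹ := by rw [h.conj_snd, mul_inv_rev]
  refine inv_eq_of_mul_eq_one_right (mul_right_cancel (b := y) ?_)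
  rw [one_mul, mul_assoc, (Commute.inv_inv_iff.mp hxy).eq, ← mul_assoc, h.fst_mul_snd_mul_fst]

theorem monoidHom_eq_id_of_map_fst_of_map_thd (hgen : Subgroup.closure {x, y, z} = ⊤)
    {χ : G →* G} (hx : χ x = x) (hz : χ z = z) : χ = MonoidHom.id G := by
  refine MonoidHom.eq_of_eqOn_dense hgen ?_
  simp only [Set.EqOn, Set.mem_insert_iff, Set.mem_singleton_iff, forall_eq_or_imp, forall_eq,
    MonoidHom.id_apply]
  refine ⟨hx, ?_, hz⟩
  rw [← h.conj_fst, map_mul, map_mul, map_inv, hx, hz]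

theorem exists_eq_conj_of_map_thd_eq (hgen : Subgroup.closure {x, y, z} = ⊤) {ψ : MulAut G}
    (hψ : ∀ g, IsConj g (ψ g)) (hz : ψ z = z) : ∃ t, ψ = MulAut.conj t := by
  obtain ⟨g, hg⟩ := isConj_iff.mp (hψ x)
  obtain ⟨t, htz, ht⟩ := h.exists_commute_conj_eq (hg ▸ h.conj_mem_union_inv hgen g)
  set χ := (MulAut.conj t)⁻¹ * ψ
  have hχz : χ z = z := by
    simp only [χ, MulAut.mul_apply, hz, MulAut.conj_inv_apply]
    rw [mul_assoc, ← htz.eq, inv_mul_cancel_left]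
  have hχx : χ x = x := by
    rcases ht with ht | ht
    · simp only [χ, MulAut.mul_apply, MulAut.conj_inv_apply, ← ht]
      group
    · have hχx : χ x = x⁻¹ := by
        simp only [χ, MulAut.mul_apply, MulAut.conj_inv_apply, ← ht]
        group
      rw [hχx, h.inv_fst_eq_fst_of_map (χ := χ.toMonoidHom) hχz hχx]
  refine ⟨t, (inv_mul_eq_one.mp ?_).symm⟩
  exact MulEquiv.toMonoidHom_injective (h.monoidHom_eq_id_of_map_fst_of_map_thd hgen hχx hχz)

theorem hasPropertyA (hgen : Subgroup.closure {x, y, z} = ⊤) : HasPropertyA G := by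
  intro φ hφ
  obtain ⟨k, hk⟩ := isConj_iff.mp (hφ z)
  have hψ : ∀ g, IsConj g (((MulAut.conj k)⁻¹ * φ) g) :=
    fun g => (hφ g).trans (isConj_iff.mpr ⟨k⁻¹, by simp⟩)
  have hψz : ((MulAut.conj k)⁻¹ * φ) z = z := by
    rw [MulAut.mul_apply, ← hk, MulAut.conj_inv_apply]
    group
  obtain ⟨t, ht⟩ := h.exists_eq_conj_of_map_thd_eq hgen hψ hψz
  refine ⟨k * t, fun g => ?_⟩
  rw [inv_mul_eq_iff_eq_mul] at ht
  rw [ht]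
  simp [mul_assoc]

end IsPPrimeTriple

theorem isPPrimeTriple_presentedGroup_of (m : ℕ) :
    IsPPrimeTriple (PresentedGroup.of 0 : PresentedGroup (PPrimeRels m)) (.of 1) (.of 2) := by
  have hrel {a b : FreeGroup (Fin 3)} (hab : a * b⁻¹ ∈ PPrimeRels m) :
      PresentedGroup.mk (PPrimeRels m) a = PresentedGroup.mk (PPrimeRels m) b :=
    PresentedGroup.mk_eq_mk_of_mul_inv_mem hab
  constructor
  · exact (hrel (a := .of 0 ^ 2) (b := (.of 0 * .of 1) ^ 2) (by simp [PPrimeRels]) :)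
  · exact (hrel (a := (.of 0 * .of 1) ^ 2) (b := .of 1 ^ 2) (by simp [PPrimeRels]) :)
  · exact (hrel (a := .of 2 * .of 0 * (.of 2)⁻¹) (b := .of 1) (by simp [PPrimeRels]) :)
  · exact (hrel (a := .of 2 * .of 1 * (.of 2)⁻¹) (b := .of 0 * .of 1) (by simp [PPrimeRels]) :)

theorem PresentedGroup.closure_of_fin_three {rels : Set (FreeGroup (Fin 3))} :
    Subgroup.closure {.of 0, .of 1, .of 2} = (⊤ : Subgroup (PresentedGroup rels)) := by
  rw [← PresentedGroup.closure_range_of]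
  congr
  ext
  simp [Fin.exists_fin_succ, eq_comm]

theorem PPrime_propertyA : ∀ m : ℕ, 1 ≤ m →
    HasPropertyA (PresentedGroup (PPrimeRels m)) :=
  fun m _ =>
    (isPPrimeTriple_presentedGroup_of m).hasPropertyA PresentedGroup.closure_of_fin_three
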